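/- Let X_p be a geometric random variable with parameter p ∈ (0, 3/4], and set q = 1 − p. Then P{|X_p − E[X_p]| ≤ √(Var(X_p))} = 1 − q^{⌊1/(1−√q)⌋}, where ⌊x⌋ denotes the greatest integer less than or equal to x. -/

import Mathlib

open MeasureTheory Real ProbabilityTheory

/-!
Write `s = √(1 - p)`, so that `1 - p = s ^ 2` and `p = (1 - s) (1 + s)`. After multiplying by `p`,
the event `|k - (1/p - 1)| ≤ s/p` reads `|k p - s ^ 2| ≤ s`. Its lower half holds for every `k ≥ 0`
because `s ^ 2 ≤ s`; its upper half, divided by `1 + s`, becomes `k (1 - s) ≤ s`, that is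
`k + 1 ≤ 1 / (1 - s)`. So the event is `{0, …, n - 1}` with `n = ⌊1 / (1 - s)⌋`, and its
geometric mass is `∑_{k < n} (1 - p) ^ k p = 1 - (1 - p) ^ n`.
-/

namespace ProbabilityTheory

lemma geometricMeasure_real_Iio {p : unitInterval} (hp : p ≠ 0) (n : ℕ) :
    (geometricMeasure p).real (Set.Iio n) = 1 - (1 - p : ℝ) ^ n := by
  rw [← Finset.coe_range, ← sum_measureReal_singleton]
  simp_rw [geometricMeasure_real_singleton hp]
  rw [← Finset.sum_mul, ← geom_sum_mul_neg, sub_sub_cancel]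

end ProbabilityTheory

lemma abs_natCast_sub_le_div_one_sub_sq_iff {s : ℝ} (hs0 : 0 ≤ s) (hs1 : s < 1) (k : ℕ) :
    |(k : ℝ) - (1 / (1 - s ^ 2) - 1)| ≤ s / (1 - s ^ 2) ↔ (k + 1 : ℝ) ≤ 1 / (1 - s) := by
  have hp : 0 < 1 - s ^ 2 := by nlinarith
  have hk : (0 : ℝ) ≤ k := k.cast_nonneg
  have hdev : (k : ℝ) - (1 / (1 - s ^ 2) - 1) = (k * (1 - s ^ 2) - s ^ 2) / (1 - s ^ 2) := by
    field_simp; ring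
  rw [hdev, abs_div, abs_of_pos hp, div_le_div_iff_of_pos_right hp, abs_le,
    le_div_iff₀ (by linarith)]
  constructor
  · rintro ⟨-, h⟩
    nlinarith
  · intro h
    constructor <;> nlinarith

lemma setOf_abs_sub_le_sqrt_eq_Iio {p : ℝ} (h0 : 0 < p) (h1 : p ≤ 1) :
    {k : ℕ | |(k : ℝ) - (1 / p - 1)| ≤ √((1 - p) / p ^ 2)} =
      Set.Iio ⌊1 / (1 - √(1 - p))⌋₊ := by
  set s := √(1 - p)
  have hs0 : 0 ≤ s := sqrt_nonneg _
  have hs2 : s ^ 2 = 1 - p := sq_sqrt (by linarith)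
  have hs1 : s < 1 := by nlinarith
  have hp : p = 1 - s ^ 2 := by linarith
  have hstd : √((1 - p) / p ^ 2) = s / p := by rw [sqrt_div' _ (sq_nonneg p), sqrt_sq h0.le]
  ext k
  rw [Set.mem_ofPred_eq, hstd, hp, abs_natCast_sub_le_div_one_sub_sq_iff hs0 hs1, Set.mem_Iio,
    Nat.lt_iff_add_one_le, Nat.le_floor_iff (one_div_nonneg.mpr (by linarith)), Nat.cast_succ]

theorem geometric_concentration_formula (p : ℝ) (h0 : 0 < p) (h34 : p ≤ 3 / 4) :
    (geometricMeasure ⟨p, h0.le, h34.trans (by norm_num)⟩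
        {k : ℕ | |(k : ℝ) - (1 / p - 1)| ≤ Real.sqrt ((1 - p) / p ^ 2)}).toReal =
      1 - (1 - p) ^ ⌊1 / (1 - Real.sqrt (1 - p))⌋ := by
  have hp : (⟨p, h0.le, h34.trans (by norm_num)⟩ : unitInterval) ≠ 0 := by
    simpa [← Subtype.coe_ne_coe] using h0.ne'
  have hx : 0 ≤ 1 / (1 - √(1 - p)) :=
    one_div_nonneg.mpr (sub_nonneg.mpr (sqrt_le_one.mpr (by linarith)))
  rw [← measureReal_def, setOf_abs_sub_le_sqrt_eq_Iio h0 (by linarith), geometricMeasure_real_Iio hp,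
    ← Int.natCast_floor_eq_floor hx, zpow_natCast]
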